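/- arXiv:2506.22840 — 5 statements merged into one kernel-verified Lean document; each statement's English description precedes it below -/
import Mathlib

section
/- The function ρ(t) = -log(t + e^{-t} - 1) + log(1 - e^{-t}) is decreasing on (0, ∞). -/
/-!
Put `s(t) = (1 - e^{-t}) / t`. Then `1 - e^{-t} = t s` and `t + e^{-t} - 1 = t (1 - s)`, so
`ρ(t) = log s - log (1 - s)` is the logit of `s(t)`. The logit is increasing on `(0, 1)`, and
`s(t)` lies in `(0, 1)` and decreases, being the slope of the convex function `exp` on `[-t, 0]`.
-/

open Real Set

noncomputable def logit (s : ℝ) : ℝ := log s - log (1 - s)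

theorem strictMonoOn_logit : StrictMonoOn logit (Ioo 0 1) := by
  intro a ⟨ha₀, ha₁⟩ b ⟨_, hb₁⟩ hab
  have hlog : log a < log b := log_lt_log ha₀ hab
  have hlog_one_sub : log (1 - b) < log (1 - a) := log_lt_log (by linarith) (by linarith)
  simp only [logit]
  linarith

theorem strictAntiOn_one_sub_exp_neg_div : StrictAntiOn (fun t : ℝ => (1 - exp (-t)) / t) (Ioi 0) := by
  intro a ha b hb hab
  have hslope := strictConvexOn_exp.secant_strict_mono (mem_univ 0) (mem_univ (-b)) (mem_univ (-a))
    (by linarith [mem_Ioi.1 hb]) (by linarith [mem_Ioi.1 ha]) (neg_lt_neg hab)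
  rwa [exp_zero, sub_zero, sub_zero, ← neg_div_neg_eq, neg_sub, neg_neg, ← neg_div_neg_eq (_ - 1),
    neg_sub, neg_neg] at hslope

theorem one_sub_exp_neg_div_mem_Ioo {t : ℝ} (ht : 0 < t) : (1 - exp (-t)) / t ∈ Ioo 0 1 := by
  have hpos : 0 < 1 - exp (-t) := by linarith [exp_lt_one_iff.2 (neg_neg_of_pos ht)]
  have hlt : 1 - exp (-t) < t := by linarith [add_one_lt_exp (neg_ne_zero.2 ht.ne')]
  exact ⟨div_pos hpos ht, (div_lt_one ht).2 hlt⟩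

theorem neg_log_add_log_eq_logit {t : ℝ} (ht : 0 < t) :
    -log (t + exp (-t) - 1) + log (1 - exp (-t)) = logit ((1 - exp (-t)) / t) := by
  obtain ⟨hs₀, hs₁⟩ := one_sub_exp_neg_div_mem_Ioo ht
  set s := (1 - exp (-t)) / t with hs
  have hnum : 1 - exp (-t) = t * s := by rw [hs, mul_div_cancel₀ _ ht.ne']
  have hden : t + exp (-t) - 1 = t * (1 - s) := by linear_combination -hnum
  rw [hnum, hden, log_mul ht.ne' hs₀.ne', log_mul ht.ne' (sub_pos.2 hs₁).ne', logit]
  ring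

/-- ρ(t) = -log(t + e^{-t} - 1) + log(1 - e^{-t}) is (strictly) decreasing on (0, ∞). -/
theorem rho_strictAntiOn :
    StrictAntiOn
      (fun t : ℝ => -Real.log (t + Real.exp (-t) - 1) + Real.log (1 - Real.exp (-t)))
      (Set.Ioi 0) :=
  (strictMonoOn_logit.comp_strictAntiOn strictAntiOn_one_sub_exp_neg_div
    fun _ ht => one_sub_exp_neg_div_mem_Ioo ht).congr fun _ ht => (neg_log_add_log_eq_logit ht).symm
end

section
/- The function τ(t) = -log(t + e^{-t} - 1) is convex on (0, ∞). -/
/-!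
τ = -log g with g(t) = t + e^{-t} - 1 > 0, and -log g is convex wherever g g'' ≤ g'².
Here g' = 1 - e^{-t} and g'' = e^{-t}, so this inequality reduces to (1 + t) e^{-t} ≤ 1,
i.e. to 1 + t ≤ e^t.
-/

open Real Set

-- `(-log ∘ g)'' = (g'² - g g'') / g²`
theorem convexOn_neg_log_of_mul_deriv2_le_sq {D : Set ℝ} (hD : Convex ℝ D) (hDo : IsOpen D)
    {g g' g'' : ℝ → ℝ} (hg : ∀ x ∈ D, HasDerivAt g (g' x) x)
    (hg' : ∀ x ∈ D, HasDerivAt g' (g'' x) x) (hpos : ∀ x ∈ D, 0 < g x)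
    (hle : ∀ x ∈ D, g x * g'' x ≤ g' x ^ 2) :
    ConvexOn ℝ D (fun x => -log (g x)) := by
  have hlog : ∀ x ∈ D, HasDerivAt (fun x => -log (g x)) (-(g' x / g x)) x :=
    fun x hx => ((hg x hx).log (hpos x hx).ne').neg
  refine convexOn_of_hasDerivWithinAt2_nonneg (f' := fun x => -(g' x / g x))
    (f'' := fun x => (g' x ^ 2 - g x * g'' x) / g x ^ 2) hD
    (fun x hx => (hlog x hx).continuousAt.continuousWithinAt) ?_ ?_ ?_ <;>
    rw [hDo.interior_eq] <;> intro x hx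
  · exact (hlog x hx).hasDerivWithinAt
  · have hgx := (hpos x hx).ne'
    refine (((hg' x hx).div (hg x hx) hgx).neg.congr_deriv ?_).hasDerivWithinAt
    field_simp
    ring
  · exact div_nonneg (sub_nonneg.2 (hle x hx)) (sq_nonneg _)

lemma exp_neg_mul_one_add_le_one (t : ℝ) : exp (-t) * (1 + t) ≤ 1 := by
  calc exp (-t) * (1 + t) ≤ exp (-t) * exp t := by
        gcongr; linarith [add_one_le_exp t]
    _ = 1 := by rw [← exp_add, neg_add_cancel, exp_zero]

/-- τ(t) = -log(t + e^{-t} - 1) is convex on (0, ∞). -/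
theorem tau_convexOn :
    ConvexOn ℝ (Set.Ioi 0) (fun t : ℝ => -Real.log (t + Real.exp (-t) - 1)) := by
  have hexp : ∀ t, HasDerivAt (fun t => exp (-t)) (-exp (-t)) t := fun t => by
    simpa using (hasDerivAt_neg t).exp
  refine convexOn_neg_log_of_mul_deriv2_le_sq (convex_Ioi 0) isOpen_Ioi
    (g' := fun t => 1 - exp (-t)) (g'' := fun t => exp (-t)) ?_ ?_ ?_ ?_ <;> intro t ht
  · simpa [← sub_eq_add_neg] using ((hasDerivAt_id t).add (hexp t)).sub_const 1
  · simpa using (hexp t).const_sub 1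
  · linarith [add_one_lt_exp (x := -t) (by simpa using (mem_Ioi.1 ht).ne')]
  · nlinarith [exp_neg_mul_one_add_le_one t, exp_pos (-t)]
end

section
/- For all t > 0, the functions τ(t) = -log(t + e^{-t} - 1) and ρ(t) = τ(t) + log(1 - e^{-t}) satisfy the identity (1 - ρ'(t)²/τ''(t)) · e^{2ρ(t) - τ(t) + t} = 1. -/
/-!
Both functions come from `g t = t + e^{-t} - 1`: `τ = -log g` and `ρ = -log g + log g'`. For any
positive `g` one computes `τ'' = (g'^2 - g g'')/g^2` and `ρ' = (g g'' - g'^2)/(g g')`, so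
`ρ'^2/τ'' = 1 - g g''/g'^2` and `(1 - ρ'^2/τ'') e^{2ρ - τ} = (g g''/g'^2)(g'^2/g) = g''`.
Here `g'' t = e^{-t}`, which the factor `e^t` cancels.
-/

open Real Filter Topology

/-- Also true when `b ^ 2 = a * c`, thanks to `x / 0 = 0`. -/
lemma one_sub_sq_div_mul_eq {a b c : ℝ} (ha : a ≠ 0) (hb : b ≠ 0) :
    (1 - (-(b / a) + c / b) ^ 2 / ((b ^ 2 - a * c) / a ^ 2)) * (b ^ 2 / a) = c := by
  rcases eq_or_ne (b ^ 2 - a * c) 0 with hd | hd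
  · rw [hd, zero_div, div_zero, sub_zero, one_mul, sub_eq_zero.mp hd, mul_div_cancel_left₀ c ha]
  · field_simp
    ring

section LogDerivatives

variable {g g' : ℝ → ℝ} {g'' t : ℝ}

lemma hasDerivAt_deriv_neg_log_comp (hg : ∀ᶠ s in 𝓝 t, HasDerivAt g (g' s) s)
    (hg' : HasDerivAt g' g'' t) (ht : g t ≠ 0) :
    HasDerivAt (deriv fun s => -log (g s)) ((g' t ^ 2 - g t * g'') / g t ^ 2) t := by
  have hne : ∀ᶠ s in 𝓝 t, g s ≠ 0 := hg.self_of_nhds.continuousAt.eventually_ne ht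
  have hderiv : deriv (fun s => -log (g s)) =ᶠ[𝓝 t] fun s => -(g' s / g s) := by
    filter_upwards [hg, hne] with s hs hs0
    exact ((hs.log hs0).neg).deriv
  refine (((hg'.div hg.self_of_nhds ht).neg).congr_of_eventuallyEq hderiv).congr_deriv ?_
  field_simp
  ring

lemma one_sub_sq_deriv_div_mul_exp_eq (τ ρ : ℝ → ℝ) (hτ : ∀ s, τ s = -log (g s))
    (hρ : ∀ s, ρ s = τ s + log (g' s)) (hg : ∀ᶠ s in 𝓝 t, HasDerivAt g (g' s) s)
    (hg' : HasDerivAt g' g'' t) (hg0 : 0 < g t) (hg'0 : g' t ≠ 0) :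
    (1 - deriv ρ t ^ 2 / deriv (deriv τ) t) * exp (2 * ρ t - τ t) = g'' := by
  have hτeq : τ = fun s => -log (g s) := funext hτ
  have hρ' : HasDerivAt ρ (-(g' t / g t) + g'' / g' t) t := by
    have hρeq : ρ = fun s => -log (g s) + log (g' s) := funext fun s => by rw [hρ, hτ]
    rw [hρeq]
    exact (hg.self_of_nhds.log hg0.ne').neg.add (hg'.log hg'0)
  have hexp : exp (2 * ρ t - τ t) = g' t ^ 2 / g t := by
    rw [hρ, hτ, ← exp_log (show 0 < g' t ^ 2 / g t by positivity), log_div (by positivity) hg0.ne',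
      log_pow]
    ring_nf
  rw [hρ'.deriv, hexp, hτeq, (hasDerivAt_deriv_neg_log_comp hg hg' hg0.ne').deriv]
  exact one_sub_sq_div_mul_eq hg0.ne' hg'0

end LogDerivatives

lemma add_exp_neg_sub_one_pos {t : ℝ} (ht : t ≠ 0) : 0 < t + exp (-t) - 1 := by
  linarith [add_one_lt_exp (neg_ne_zero.mpr ht)]

/-- For all t > 0, with τ(t) = -log(t + e^{-t} - 1) and ρ(t) = τ(t) + log(1 - e^{-t}),
one has (1 - ρ'(t)²/τ''(t)) · e^{2ρ(t) - τ(t) + t} = 1. -/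
theorem tau_rho_identity
    (τ ρ : ℝ → ℝ)
    (hτ : ∀ t, τ t = -Real.log (t + Real.exp (-t) - 1))
    (hρ : ∀ t, ρ t = τ t + Real.log (1 - Real.exp (-t))) :
    ∀ t > (0 : ℝ),
      (1 - (deriv ρ t) ^ 2 / (deriv (deriv τ) t)) * Real.exp (2 * ρ t - τ t + t) = 1 := by
  intro t ht
  have hg : ∀ s, HasDerivAt (fun s => s + exp (-s) - 1) (1 - exp (-s)) s := fun s => by
    simpa [sub_eq_add_neg] using ((hasDerivAt_id s).add (hasDerivAt_neg s).exp).sub_const 1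
  have hg' : HasDerivAt (fun s => 1 - exp (-s)) (exp (-t)) t := by
    simpa using ((hasDerivAt_neg t).exp).const_sub 1
  have hg't : 1 - exp (-t) ≠ 0 := sub_ne_zero.mpr (exp_lt_one_iff.mpr (neg_neg_of_pos ht)).ne'
  rw [exp_add, ← mul_assoc, one_sub_sq_deriv_div_mul_exp_eq τ ρ hτ hρ (Eventually.of_forall hg) hg'
    (add_exp_neg_sub_one_pos ht.ne') hg't, ← exp_add, neg_add_cancel, exp_zero]
end

section
/- For the functions τ(t) = -log(t + e^{-t} - 1) and ρ(t) = τ(t) + log(1 - e^{-t}) on (0,∞), the limit of τ(t) - 2ρ(t) + log(-τ'(t)) as t → ∞ equals 0. -/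
/-- For τ(t) = -log(t + e^{-t} - 1) and ρ(t) = τ(t) + log(1 - e^{-t}) on (0,∞),
τ(t) - 2ρ(t) + log(-τ'(t)) → 0 as t → ∞. -/
theorem tau_rho_limit_zero
    (τ ρ : ℝ → ℝ)
    (hτ : ∀ t, τ t = -Real.log (t + Real.exp (-t) - 1))
    (hρ : ∀ t, ρ t = τ t + Real.log (1 - Real.exp (-t))) :
    Filter.Tendsto (fun t => τ t - 2 * ρ t + Real.log (-(deriv τ t)))
      Filter.atTop (nhds 0) := by
  have hτfun : τ = fun s => -Real.log (s + Real.exp (-s) - 1) := funext hτ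
  have key : ∀ t : ℝ, 0 < t →
      τ t - 2 * ρ t + Real.log (-(deriv τ t)) = -Real.log (1 - Real.exp (-t)) := by
    intro t ht
    have hgpos : 0 < t + Real.exp (-t) - 1 := by
      have := Real.add_one_lt_exp (x := -t) (by linarith)
      linarith
    have hepos : 0 < 1 - Real.exp (-t) := by
      have : Real.exp (-t) < 1 := Real.exp_lt_one_iff.mpr (by linarith)
      linarith
    have h1 : HasDerivAt (fun s : ℝ => Real.exp (-s)) (-Real.exp (-t)) t := by
      simpa using (hasDerivAt_neg t).exp
    have hg : HasDerivAt (fun s : ℝ => s + Real.exp (-s) - 1) (1 - Real.exp (-t)) t := by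
      have := ((hasDerivAt_id t).add h1).sub_const 1
      simpa [sub_eq_add_neg] using this
    have hd : HasDerivAt τ (-((1 - Real.exp (-t)) / (t + Real.exp (-t) - 1))) t := by
      rw [hτfun]
      exact (hg.log hgpos.ne').neg
    have hderiv : deriv τ t = -((1 - Real.exp (-t)) / (t + Real.exp (-t) - 1)) := hd.deriv
    rw [hρ, hτ, hderiv, neg_neg,
      Real.log_div hepos.ne' hgpos.ne']
    ring
  have hlim : Filter.Tendsto (fun t : ℝ => -Real.log (1 - Real.exp (-t)))
      Filter.atTop (nhds 0) := by
    have h1 : Filter.Tendsto (fun t : ℝ => Real.exp (-t)) Filter.atTop (nhds 0) := by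
      simpa using Real.tendsto_exp_neg_atTop_nhds_zero
    have h2 : Filter.Tendsto (fun t : ℝ => 1 - Real.exp (-t)) Filter.atTop (nhds 1) := by
      simpa using (tendsto_const_nhds.sub h1)
    have h3 := (Real.continuousAt_log one_ne_zero).tendsto.comp h2
    simpa using h3.neg
  refine hlim.congr' ?_
  filter_upwards [Filter.eventually_gt_atTop 0] with t ht
  exact (key t ht).symm
end

section
/- The limit as t → 0⁺ of ρ'(t)²/τ''(t) equals 1/2, where τ(t) = -log(t + e^{-t} - 1) and ρ(t) = τ(t) + log(1 - e^{-t}). -/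
/-!
With `f t = t + e^{-t} - 1` and `g = f' = 1 - e^{-t}`, one has `τ' = -g / f` and
`τ'' = k / f²`, `ρ' = -k / (f g)` with `k = g² - f g' = 1 - (1 + t) e^{-t}`. Hence
`ρ'² / τ'' = k / g²` identically for `t ≠ 0`, and two applications of l'Hôpital's rule
(`k' / (g²)' = t / (2 g)` and `t / g → 1`) give the limit `1 / 2`.
-/

open Real Filter Set Topology

namespace TauRho

noncomputable def tau (t : ℝ) : ℝ := -log (t + exp (-t) - 1)

noncomputable def rho (t : ℝ) : ℝ := tau t + log (1 - exp (-t))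

lemma hasDerivAt_exp_neg (t : ℝ) : HasDerivAt (fun s => exp (-s)) (-exp (-t)) t := by
  simpa using (hasDerivAt_neg t).exp

lemma add_exp_neg_sub_one_pos {t : ℝ} (ht : t ≠ 0) : 0 < t + exp (-t) - 1 := by
  linarith [one_sub_lt_exp_neg ht]

lemma one_sub_exp_neg_ne_zero {t : ℝ} (ht : t ≠ 0) : 1 - exp (-t) ≠ 0 := by
  rw [sub_ne_zero, ne_comm, Ne, exp_eq_one_iff, neg_eq_zero]
  exact ht

lemma one_sub_one_add_mul_exp_neg_pos {t : ℝ} (ht : t ≠ 0) : 0 < 1 - (1 + t) * exp (-t) := by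
  have h : (1 + t) * exp (-t) < exp t * exp (-t) :=
    mul_lt_mul_of_pos_right (by linarith [add_one_lt_exp ht]) (exp_pos _)
  rw [← exp_add, add_neg_cancel, exp_zero] at h
  linarith

lemma hasDerivAt_add_exp_neg_sub_one (t : ℝ) :
    HasDerivAt (fun s => s + exp (-s) - 1) (1 - exp (-t)) t := by
  simpa [sub_eq_add_neg] using ((hasDerivAt_id t).add (hasDerivAt_exp_neg t)).sub_const 1

lemma hasDerivAt_one_sub_exp_neg (t : ℝ) : HasDerivAt (fun s => 1 - exp (-s)) (exp (-t)) t := by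
  simpa using (hasDerivAt_exp_neg t).const_sub 1

lemma hasDerivAt_tau {t : ℝ} (ht : t ≠ 0) :
    HasDerivAt tau (-((1 - exp (-t)) / (t + exp (-t) - 1))) t :=
  ((hasDerivAt_add_exp_neg_sub_one t).log (add_exp_neg_sub_one_pos ht).ne').neg

lemma deriv_deriv_tau {t : ℝ} (ht : t ≠ 0) :
    deriv (deriv tau) t = (1 - (1 + t) * exp (-t)) / (t + exp (-t) - 1) ^ 2 := by
  have hf := (add_exp_neg_sub_one_pos ht).ne'
  have hτ' : deriv tau =ᶠ[𝓝 t] fun s => -((1 - exp (-s)) / (s + exp (-s) - 1)) :=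
    (eventually_ne_nhds ht).mono fun s hs => (hasDerivAt_tau hs).deriv
  have hτ'' : HasDerivAt (fun s => -((1 - exp (-s)) / (s + exp (-s) - 1)))
      (-((exp (-t) * (t + exp (-t) - 1) - (1 - exp (-t)) * (1 - exp (-t)))
        / (t + exp (-t) - 1) ^ 2)) t :=
    ((hasDerivAt_one_sub_exp_neg t).div (hasDerivAt_add_exp_neg_sub_one t) hf).neg
  rw [hτ'.deriv_eq, hτ''.deriv]
  field_simp
  ring

lemma deriv_rho {t : ℝ} (ht : t ≠ 0) :
    deriv rho t = -((1 - (1 + t) * exp (-t)) / ((t + exp (-t) - 1) * (1 - exp (-t)))) := by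
  have hf := (add_exp_neg_sub_one_pos ht).ne'
  have hg := one_sub_exp_neg_ne_zero ht
  have hρ' : HasDerivAt rho
      (-((1 - exp (-t)) / (t + exp (-t) - 1)) + exp (-t) / (1 - exp (-t))) t :=
    (hasDerivAt_tau ht).add ((hasDerivAt_one_sub_exp_neg t).log hg)
  rw [hρ'.deriv]
  field_simp
  ring

lemma sq_deriv_rho_div_deriv_deriv_tau {t : ℝ} (ht : t ≠ 0) :
    deriv rho t ^ 2 / deriv (deriv tau) t = (1 - (1 + t) * exp (-t)) / (1 - exp (-t)) ^ 2 := by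
  rw [deriv_rho ht, deriv_deriv_tau ht]
  have := (add_exp_neg_sub_one_pos ht).ne'
  have := one_sub_exp_neg_ne_zero ht
  have := (one_sub_one_add_mul_exp_neg_pos ht).ne'
  field_simp

lemma tendsto_div_one_sub_exp_neg :
    Tendsto (fun t => t / (1 - exp (-t))) (𝓝[≠] 0) (𝓝 1) := by
  refine HasDerivAt.lhopital_zero_nhdsNE (f' := fun _ => 1) (g' := fun t => exp (-t))
    (Eventually.of_forall hasDerivAt_id) (Eventually.of_forall hasDerivAt_one_sub_exp_neg)
    (Eventually.of_forall fun t => (exp_pos _).ne') ?_ ?_ ?_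
  · exact tendsto_nhdsWithin_of_tendsto_nhds tendsto_id
  · exact tendsto_nhdsWithin_of_tendsto_nhds
      ((continuous_const.sub (continuous_exp.comp continuous_neg)).tendsto' 0 0 (by simp))
  · simp only [one_div, ← exp_neg, neg_neg]
    exact tendsto_nhdsWithin_of_tendsto_nhds (continuous_exp.tendsto' 0 1 exp_zero)

lemma tendsto_one_sub_one_add_mul_exp_neg_div_sq :
    Tendsto (fun t => (1 - (1 + t) * exp (-t)) / (1 - exp (-t)) ^ 2) (𝓝[≠] 0) (𝓝 (1 / 2)) := by
  refine HasDerivAt.lhopital_zero_nhdsNE (f' := fun t => t * exp (-t))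
    (g' := fun t => 2 * (1 - exp (-t)) * exp (-t)) (Eventually.of_forall fun t => ?_)
    (Eventually.of_forall fun t => ?_) ?_ ?_ ?_ ?_
  · refine ((((hasDerivAt_id' t).const_add 1).mul (hasDerivAt_exp_neg t)).const_sub 1
      ).congr_deriv ?_
    ring
  · refine ((hasDerivAt_one_sub_exp_neg t).pow 2).congr_deriv ?_
    ring
  · filter_upwards [self_mem_nhdsWithin] with t ht
    exact mul_ne_zero (mul_ne_zero two_ne_zero (one_sub_exp_neg_ne_zero ht)) (exp_pos _).ne'
  · exact tendsto_nhdsWithin_of_tendsto_nhds ((continuous_const.sub ((continuous_const.add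
      continuous_id).mul (continuous_exp.comp continuous_neg))).tendsto' 0 0 (by simp))
  · exact tendsto_nhdsWithin_of_tendsto_nhds (((continuous_const.sub
      (continuous_exp.comp continuous_neg)).pow 2).tendsto' 0 0 (by simp))
  · have h : (fun t => t * exp (-t) / (2 * (1 - exp (-t)) * exp (-t)))
        = fun t => t / (1 - exp (-t)) / 2 := by
      ext t
      rw [mul_div_mul_right _ _ (exp_pos _).ne', div_mul_eq_div_div_swap]
    rw [h]
    exact tendsto_div_one_sub_exp_neg.div_const 2

end TauRho

/-- The limit as t → 0⁺ of ρ'(t)²/τ''(t) equals 1/2, where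
τ(t) = -log(t + e^{-t} - 1) and ρ(t) = τ(t) + log(1 - e^{-t}). -/
theorem tau_rho_quotient_tendsto_half
    (τ ρ : ℝ → ℝ)
    (hτ : ∀ t, τ t = -Real.log (t + Real.exp (-t) - 1))
    (hρ : ∀ t, ρ t = τ t + Real.log (1 - Real.exp (-t))) :
    Filter.Tendsto (fun t => (deriv ρ t) ^ 2 / (deriv (deriv τ) t))
      (nhdsWithin 0 (Set.Ioi 0)) (nhds (1 / 2)) := by
  obtain rfl : τ = TauRho.tau := funext hτ
  obtain rfl : ρ = TauRho.rho := funext hρ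
  refine (TauRho.tendsto_one_sub_one_add_mul_exp_neg_div_sq.mono_left
    (nhdsWithin_mono _ fun t ht => ne_of_gt ht)).congr' ?_
  filter_upwards [self_mem_nhdsWithin] with t ht
  exact (TauRho.sq_deriv_rho_div_deriv_deriv_tau (ne_of_gt ht)).symm
end
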